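/- arXiv:1209.5906 — 2 statements merged into one kernel-verified Lean document; each statement's English description precedes it below -/
import Mathlib

section
/- If G and G′ are adjacency-cospectral graphs whose adjacency coronals coincide, Γ_{A(G)}(x) = Γ_{A(G′)}(x), and H is an arbitrary graph, then H ⋆ G and H ⋆ G′ are adjacency cospectral. -/
open Matrix Polynomial BigOperators

/-- The neighbourhood corona `G₁ ⋆ G₂` of two simple graphs. -/
def ncorona {V₁ V₂ : Type*} (G₁ : SimpleGraph V₁) (G₂ : SimpleGraph V₂) :
    SimpleGraph (V₁ ⊕ V₁ × V₂) where
  Adj := fun a b =>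
    match a, b with
    | Sum.inl v, Sum.inl w => G₁.Adj v w
    | Sum.inl v, Sum.inr iu => G₁.Adj v iu.1
    | Sum.inr iu, Sum.inl w => G₁.Adj w iu.1
    | Sum.inr iu, Sum.inr jw => iu.1 = jw.1 ∧ G₂.Adj iu.2 jw.2
  symm := by
    constructor
    rintro (v | ⟨i, u⟩) (w | ⟨j, z⟩) h
    · exact G₁.adj_symm h
    · exact h
    · exact h
    · exact ⟨h.1.symm, G₂.adj_symm h.2⟩
  loopless := by
    constructor
    rintro (v | ⟨i, u⟩) h
    · exact G₁.loopless.irrefl v h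
    · exact G₂.loopless.irrefl u h.2

noncomputable instance {V₁ V₂ : Type*} (G₁ : SimpleGraph V₁) (G₂ : SimpleGraph V₂) :
    DecidableRel (ncorona G₁ G₂).Adj := Classical.decRel _

/-- The `M`-coronal `Γ_M(x) = 1ᵀ (xI - M)⁻¹ 1`, the sum of the entries of `(xI - M)⁻¹`. -/
noncomputable def coronal {n : Type*} [Fintype n] [DecidableEq n]
    (M : Matrix n n ℝ) (x : ℝ) : ℝ :=
  ∑ i, ∑ j, (x • (1 : Matrix n n ℝ) - M)⁻¹ i j

/-!
With `H` on `W` and `G` on `V`, the matrix `xI - A(H ⋆ G)` is the block matrix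
`[[xI - A_H, -A_H ⊗ 1ᵀ], [-A_H ⊗ 1, I_W ⊗ (xI - A_G)]]`. Whenever `x` is not an eigenvalue of
`G`, taking the Schur complement of the lower right block gives
`det (xI - A(H ⋆ G)) = det (xI - A_G) ^ |W| · det (xI - A_H - Γ_{A_G}(x) · A_H²)`,
which depends on `G` only through its characteristic polynomial and its coronal. The two
characteristic polynomials therefore agree at all but finitely many `x`.
-/

open scoped Kronecker

namespace Matrix

variable {l m V W R : Type*} [Fintype V] [Fintype W] [DecidableEq W]

theorem eval_charpoly_eq_det_smul_one_sub [DecidableEq V] [CommRing R] (M : Matrix V V R)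
    (x : R) : M.charpoly.eval x = (x • (1 : Matrix V V R) - M).det := by
  rw [eval_charpoly, scalar_apply, smul_one_eq_diagonal]

theorem submatrix_fst_mul_one_kronecker_mul_submatrix_fst [CommSemiring R]
    (M₁ : Matrix l W R) (N : Matrix V V R) (M₂ : Matrix W m R) :
    M₁.submatrix id (Prod.fst : W × V → W) * ((1 : Matrix W W R) ⊗ₖ N) *
        M₂.submatrix (Prod.fst : W × V → W) id =
      (∑ i, ∑ j, N i j) • (M₁ * M₂) := by
  ext a b
  simp only [mul_apply, Fintype.sum_prod_type, submatrix_apply, id, kronecker_apply, one_apply,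
    mul_ite, ite_mul, mul_zero, zero_mul, one_mul, smul_apply, smul_eq_mul, Finset.sum_mul,
    Finset.mul_sum]
  rw [Finset.sum_comm]
  simp only [Finset.sum_comm (γ := W), Finset.sum_ite_eq, Finset.mem_univ, if_true]
  rw [Finset.sum_comm]
  exact Fintype.sum_congr _ _ fun _ => Fintype.sum_congr _ _ fun _ =>
    Fintype.sum_congr _ _ fun _ => by ring

theorem det_fromBlocks_one_kronecker [DecidableEq V] [CommRing R]
    (A M₁ M₂ : Matrix W W R) (N : Matrix V V R) (hN : IsUnit N.det) :
    (fromBlocks A (M₁.submatrix id (Prod.fst : W × V → W))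
        (M₂.submatrix (Prod.fst : W × V → W) id) ((1 : Matrix W W R) ⊗ₖ N)).det =
      N.det ^ Fintype.card W * (A - (∑ i, ∑ j, N⁻¹ i j) • (M₁ * M₂)).det := by
  have hD : IsUnit ((1 : Matrix W W R) ⊗ₖ N).det := by
    simpa [det_kronecker] using hN.pow _
  let _ := invertibleOfIsUnitDet _ hD
  have h := submatrix_fst_mul_one_kronecker_mul_submatrix_fst M₁ N⁻¹ M₂
  rw [det_fromBlocks₂₂, invOf_eq_nonsing_inv, inv_kronecker, inv_one, h, det_kronecker]
  simp

end Matrix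

namespace SimpleGraph

variable {V W : Type*} [DecidableEq W] (G : SimpleGraph V) (H : SimpleGraph W)
  [DecidableRel G.Adj] [DecidableRel H.Adj]

theorem adjMatrix_ncorona (R : Type*) [MulZeroOneClass R] :
    (ncorona H G).adjMatrix R =
      fromBlocks (H.adjMatrix R) ((H.adjMatrix R).submatrix id (Prod.fst : W × V → W))
        ((H.adjMatrix R).submatrix (Prod.fst : W × V → W) id) (1 ⊗ₖ G.adjMatrix R) := by
  ext (v | ⟨i, u⟩) (w | ⟨j, z⟩) <;>
    simp only [adjMatrix_apply, fromBlocks_apply₁₁, fromBlocks_apply₁₂, fromBlocks_apply₂₁,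
      fromBlocks_apply₂₂, submatrix_apply, id, kronecker_apply, one_apply] <;>
    split_ifs <;> simp_all [ncorona, H.adj_comm]

variable [DecidableEq V] {R : Type*} [CommRing R]

theorem smul_one_sub_adjMatrix_ncorona (x : R) :
    x • (1 : Matrix (W ⊕ W × V) (W ⊕ W × V) R) - (ncorona H G).adjMatrix R =
      fromBlocks (x • 1 - H.adjMatrix R)
        ((-H.adjMatrix R).submatrix id (Prod.fst : W × V → W))
        ((-H.adjMatrix R).submatrix (Prod.fst : W × V → W) id)
        (1 ⊗ₖ (x • 1 - G.adjMatrix R)) := by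
  rw [adjMatrix_ncorona, ← fromBlocks_one, fromBlocks_smul, sub_eq_add_neg, fromBlocks_neg,
    fromBlocks_add]
  congr 1 <;> ext <;> simp [one_apply, Prod.ext_iff, sub_eq_add_neg]
  split_ifs <;> simp_all

variable [Fintype V] [Fintype W]

theorem det_smul_one_sub_adjMatrix_ncorona (x : R)
    (hx : IsUnit (x • (1 : Matrix V V R) - G.adjMatrix R).det) :
    (x • (1 : Matrix (W ⊕ W × V) (W ⊕ W × V) R) - (ncorona H G).adjMatrix R).det =
      (x • (1 : Matrix V V R) - G.adjMatrix R).det ^ Fintype.card W *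
        (x • 1 - H.adjMatrix R -
          (∑ i, ∑ j, (x • (1 : Matrix V V R) - G.adjMatrix R)⁻¹ i j) •
            (H.adjMatrix R * H.adjMatrix R)).det := by
  rw [smul_one_sub_adjMatrix_ncorona, det_fromBlocks_one_kronecker _ _ _ _ hx, neg_mul_neg]

end SimpleGraph

open SimpleGraph in
/-- Corollary 2.4(b): if `G` and `G'` are adjacency cospectral with equal adjacency coronals
and `H` is arbitrary, then `H ⋆ G` and `H ⋆ G'` are adjacency cospectral. -/
theorem ncorona_cospectral_right {V V' W : Type*} [Fintype V] [Fintype V'] [Fintype W]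
    [DecidableEq V] [DecidableEq V'] [DecidableEq W]
    (G : SimpleGraph V) (G' : SimpleGraph V') (H : SimpleGraph W)
    [DecidableRel G.Adj] [DecidableRel G'.Adj] [DecidableRel H.Adj]
    (hcos : (G.adjMatrix ℝ).charpoly = (G'.adjMatrix ℝ).charpoly)
    (hΓ : ∀ x : ℝ, coronal (G.adjMatrix ℝ) x = coronal (G'.adjMatrix ℝ) x) :
    ((ncorona H G).adjMatrix ℝ).charpoly = ((ncorona H G').adjMatrix ℝ).charpoly := by
  refine eq_of_infinite_eval_eq _ _ <|
    (finite_setOfPred_isRoot (charpoly_monic (G.adjMatrix ℝ)).ne_zero).infinite_compl.mono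
      fun x (hx : (G.adjMatrix ℝ).charpoly.eval x ≠ 0) => ?_
  have hxG : IsUnit (x • (1 : Matrix V V ℝ) - G.adjMatrix ℝ).det := by
    rw [← eval_charpoly_eq_det_smul_one_sub]
    exact isUnit_iff_ne_zero.2 hx
  have hxG' : IsUnit (x • (1 : Matrix V' V' ℝ) - G'.adjMatrix ℝ).det := by
    rw [← eval_charpoly_eq_det_smul_one_sub, ← hcos]
    exact isUnit_iff_ne_zero.2 hx
  unfold coronal at hΓ
  rw [Set.mem_ofPred_eq, eval_charpoly_eq_det_smul_one_sub, eval_charpoly_eq_det_smul_one_sub,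
    det_smul_one_sub_adjMatrix_ncorona G H x hxG, det_smul_one_sub_adjMatrix_ncorona G' H x hxG',
    ← eval_charpoly_eq_det_smul_one_sub, ← eval_charpoly_eq_det_smul_one_sub, hcos, hΓ]
end

section
/- Let G₁ be an r₁-regular graph on n₁ ≥ 2 vertices (r₁ ≥ 1) and G₂ arbitrary on n₂ ≥ 1 vertices. Then φ(Q(G₁ ⋆ G₂); x) = (φ(Q(G₂); x − r₁))^{n₁} · ∏_{i=1}^{n₁} (x − n₂r₁ − νᵢ(G₁) − Γ_{Q(G₂)}(x − r₁)·(νᵢ(G₁) − r₁)²), where ν₁(G₁) ≤ … ≤ ν_{n₁}(G₁) are the signless Laplacian eigenvalues of G₁, valid for all x where (x − r₁)I − Q(G₂) is invertible. -/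
open Matrix Polynomial BigOperators

/-- The signless Laplacian `Q(G) = D(G) + A(G)` of a simple graph. -/
def signlessLap {V : Type*} [Fintype V] [DecidableEq V]
    (G : SimpleGraph V) [DecidableRel G.Adj] : Matrix V V ℝ :=
  G.degMatrix ℝ + G.adjMatrix ℝ

/-!
With the vertices ordered as `V₁ ⊕ V₁ × V₂`, the matrix `xI - Q(G₁ ⋆ G₂)` has lower-right block
`I ⊗ ((x - r₁)I - Q(G₂))`, and its off-diagonal blocks repeat the rows and columns of `-A(G₁)`.
The Schur complement of that block is `(x - r₁ - n₂r₁)I - A(G₁) - Γ A(G₁)²`, where `Γ` is the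
`Q(G₂)`-coronal at `x - r₁`. Regularity gives `A(G₁) = Q(G₁) - r₁I`, so the Schur complement is a
polynomial in the symmetric matrix `Q(G₁)`, and its determinant is the product of that polynomial
over the eigenvalues of `Q(G₁)`.
-/

open scoped Kronecker

namespace Matrix

theorem IsHermitian.det_aeval {𝕜 n : Type*} [RCLike 𝕜] [Fintype n] [DecidableEq n]
    {A : Matrix n n 𝕜} (hA : A.IsHermitian) (p : ℝ[X]) :
    (aeval A p).det = ∏ i, ((p.eval (hA.eigenvalues i) : ℝ) : 𝕜) := by
  rw [← cfc_polynomial p A hA.isSelfAdjoint, hA.cfc_eq, IsHermitian.cfc]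
  simp [-Unitary.conjStarAlgAut_apply]

theorem submatrix_id_fst_mul_one_kronecker_mul {m n α : Type*} [Fintype m] [Fintype n]
    [DecidableEq m] [CommSemiring α] (A B : Matrix m m α) (M : Matrix n n α) :
    (A.submatrix id Prod.fst : Matrix m (m × n) α) * ((1 : Matrix m m α) ⊗ₖ M) *
        (B.submatrix Prod.fst id : Matrix (m × n) m α)
      = (∑ i, ∑ j, M i j) • (A * B) := by
  ext v w
  simp only [mul_apply, kronecker_apply, one_apply, Fintype.sum_prod_type, submatrix_apply, id,
    smul_apply, smul_eq_mul, mul_ite, ite_mul, mul_zero, zero_mul, Finset.sum_mul,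
    Finset.mul_sum]
  refine Finset.sum_congr rfl fun j _ => ?_
  rw [Finset.sum_comm]
  simp only [Finset.sum_ite_irrel, Finset.sum_const_zero, Finset.sum_ite_eq', Finset.mem_univ,
    if_true, one_mul]
  rw [Finset.sum_comm]
  exact Finset.sum_congr rfl fun _ _ => Finset.sum_congr rfl fun _ _ => by ring

theorem det_fromBlocks_submatrix_one_kronecker {m n α : Type*} [Fintype m] [Fintype n]
    [DecidableEq m] [DecidableEq n] [CommRing α] (A B C : Matrix m m α) {S : Matrix n n α}
    (hS : IsUnit S.det) :
    (fromBlocks A (B.submatrix id Prod.fst) (C.submatrix Prod.fst id) (1 ⊗ₖ S)).det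
      = S.det ^ Fintype.card m * (A - (∑ i, ∑ j, S⁻¹ i j) • (B * C)).det := by
  have hD : IsUnit ((1 : Matrix m m α) ⊗ₖ S).det := by
    rw [det_kronecker, det_one, one_pow, one_mul]
    exact hS.pow _
  have := invertibleOfIsUnitDet _ hD
  rw [det_fromBlocks₂₂, invOf_eq_nonsing_inv, inv_kronecker, inv_one,
    submatrix_id_fst_mul_one_kronecker_mul, det_kronecker, det_one, one_pow, one_mul]

end Matrix

namespace SimpleGraph

theorem IsRegularOfDegree.degMatrix_eq {V R : Type*} [Fintype V] [DecidableEq V] [Semiring R]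
    {G : SimpleGraph V} [DecidableRel G.Adj] {r : ℕ} (h : G.IsRegularOfDegree r) :
    G.degMatrix R = (r : R) • 1 := by
  rw [degMatrix, smul_one_eq_diagonal]
  exact congrArg diagonal (funext fun v => by rw [h v])

section ncorona

variable {V₁ V₂ : Type*} (G₁ : SimpleGraph V₁) (G₂ : SimpleGraph V₂)

@[simp] theorem ncorona_adj_inl_inl {v w : V₁} :
    (ncorona G₁ G₂).Adj (.inl v) (.inl w) ↔ G₁.Adj v w := .rfl

@[simp] theorem ncorona_adj_inl_inr {v : V₁} {iu : V₁ × V₂} :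
    (ncorona G₁ G₂).Adj (.inl v) (.inr iu) ↔ G₁.Adj v iu.1 := .rfl

@[simp] theorem ncorona_adj_inr_inl {iu : V₁ × V₂} {w : V₁} :
    (ncorona G₁ G₂).Adj (.inr iu) (.inl w) ↔ G₁.Adj w iu.1 := .rfl

@[simp] theorem ncorona_adj_inr_inr {iu jz : V₁ × V₂} :
    (ncorona G₁ G₂).Adj (.inr iu) (.inr jz) ↔ iu.1 = jz.1 ∧ G₂.Adj iu.2 jz.2 := .rfl

variable [Fintype V₁] [Fintype V₂] [DecidableRel G₁.Adj]

theorem degree_ncorona_inl (v : V₁) :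
    (ncorona G₁ G₂).degree (.inl v) = G₁.degree v * (1 + Fintype.card V₂) := by
  simp only [← card_neighborFinset_eq_degree, neighborFinset_eq_filter, Finset.card_filter,
    Fintype.sum_sum_type, Fintype.sum_prod_type]
  simp [mul_add, Finset.sum_ite, Finset.sum_const]

theorem degree_ncorona_inr [DecidableEq V₁] [DecidableRel G₂.Adj] (iu : V₁ × V₂) :
    (ncorona G₁ G₂).degree (.inr iu) = G₁.degree iu.1 + G₂.degree iu.2 := by
  simp only [← card_neighborFinset_eq_degree, neighborFinset_eq_filter, Finset.card_filter,
    Fintype.sum_sum_type, Fintype.sum_prod_type]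
  simp [ite_and, adj_comm]

end ncorona

end SimpleGraph

open SimpleGraph in
theorem signlessLap_ncorona_of_isRegularOfDegree {V₁ V₂ : Type*} [Fintype V₁] [Fintype V₂]
    [DecidableEq V₁] [DecidableEq V₂] {G₁ : SimpleGraph V₁} (G₂ : SimpleGraph V₂)
    [DecidableRel G₁.Adj] [DecidableRel G₂.Adj] {r : ℕ} (hreg : G₁.IsRegularOfDegree r) :
    signlessLap (ncorona G₁ G₂) =
      fromBlocks ((r * (1 + Fintype.card V₂) : ℝ) • 1 + G₁.adjMatrix ℝ)
        ((G₁.adjMatrix ℝ).submatrix id Prod.fst) ((G₁.adjMatrix ℝ).submatrix Prod.fst id)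
        ((1 : Matrix V₁ V₁ ℝ) ⊗ₖ ((r : ℝ) • 1 + signlessLap G₂)) := by
  ext (v | ⟨i, u⟩) (w | ⟨j, z⟩)
  · simp [signlessLap, degMatrix, diagonal_apply, one_apply, degree_ncorona_inl, hreg v]
  · simp [signlessLap, degMatrix]
  · simp [signlessLap, degMatrix, adj_comm]
  · simp [signlessLap, degMatrix, diagonal_apply, one_apply, degree_ncorona_inr, hreg i]
    split_ifs <;> simp_all

open SimpleGraph in
theorem smul_one_sub_signlessLap_ncorona_of_isRegularOfDegree {V₁ V₂ : Type*} [Fintype V₁]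
    [Fintype V₂] [DecidableEq V₁] [DecidableEq V₂] {G₁ : SimpleGraph V₁} (G₂ : SimpleGraph V₂)
    [DecidableRel G₁.Adj] [DecidableRel G₂.Adj] {r : ℕ} (hreg : G₁.IsRegularOfDegree r) (x : ℝ) :
    x • 1 - signlessLap (ncorona G₁ G₂) =
      fromBlocks ((x - r * (1 + Fintype.card V₂)) • 1 - G₁.adjMatrix ℝ)
        ((-G₁.adjMatrix ℝ).submatrix id Prod.fst) ((-G₁.adjMatrix ℝ).submatrix Prod.fst id)
        ((1 : Matrix V₁ V₁ ℝ) ⊗ₖ ((x - r) • 1 - signlessLap G₂)) := by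
  rw [signlessLap_ncorona_of_isRegularOfDegree G₂ hreg, ← fromBlocks_one, fromBlocks_smul,
    sub_eq_add_neg, fromBlocks_neg, fromBlocks_add]
  congr 1
  · module
  · ext; simp
  · ext; simp
  · rw [← sub_eq_add_neg]
    refine (eq_sub_of_add_eq ?_).symm
    rw [← kronecker_add, sub_add_add_cancel, ← add_smul, sub_add_cancel, kronecker_smul,
      one_kronecker_one]

theorem ncorona_signlessLap_charpoly_general {V₁ V₂ : Type*} [Fintype V₁] [Fintype V₂]
    [DecidableEq V₁] [DecidableEq V₂]
    (G₁ : SimpleGraph V₁) (G₂ : SimpleGraph V₂)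
    [DecidableRel G₁.Adj] [DecidableRel G₂.Adj]
    (n₁ n₂ r₁ : ℕ) (h₁ : Fintype.card V₁ = n₁) (h₂ : Fintype.card V₂ = n₂)
    (hreg : G₁.IsRegularOfDegree r₁)
    (hQ : (signlessLap G₁).IsHermitian)
    (x : ℝ) (hinv : IsUnit ((x - r₁) • (1 : Matrix V₂ V₂ ℝ) - signlessLap G₂).det) :
    (x • (1 : Matrix (V₁ ⊕ V₁ × V₂) (V₁ ⊕ V₁ × V₂) ℝ)
        - signlessLap (ncorona G₁ G₂)).det =
      ((x - r₁) • (1 : Matrix V₂ V₂ ℝ) - signlessLap G₂).det ^ n₁ *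
        ∏ i : V₁, (x - n₂ * r₁ - hQ.eigenvalues i
          - coronal (signlessLap G₂) (x - r₁) * (hQ.eigenvalues i - r₁) ^ 2) := by
  set Γ := coronal (signlessLap G₂) (x - r₁)
  set A := G₁.adjMatrix ℝ
  have hΓ : ∑ i, ∑ j, ((x - r₁) • (1 : Matrix V₂ V₂ ℝ) - signlessLap G₂)⁻¹ i j = Γ := rfl
  have hschur : (x - r₁ * (1 + n₂)) • 1 - A - Γ • (A * A) =
      aeval (signlessLap G₁) (C (x - n₂ * r₁) - X - C Γ * (X - C (r₁ : ℝ)) ^ 2) := by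
    simp only [signlessLap, hreg.degMatrix_eq, map_sub, map_mul, aeval_C, aeval_X,
      Algebra.algebraMap_eq_smul_one, add_sub_cancel_left, sq, smul_one_mul]
    module
  rw [smul_one_sub_signlessLap_ncorona_of_isRegularOfDegree G₂ hreg,
    det_fromBlocks_submatrix_one_kronecker _ _ _ hinv, h₁, h₂, neg_mul_neg, hΓ, hschur,
    hQ.det_aeval]
  refine congrArg _ (Finset.prod_congr rfl fun i _ => ?_)
  simp

/-- Theorem 2.5: for `G₁` an `r₁`-regular graph on `n₁ ≥ 2` vertices and `G₂` arbitrary on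
`n₂ ≥ 1` vertices,
`φ(Q(G₁ ⋆ G₂); x) = φ(Q(G₂); x - r₁)^{n₁} ∏ᵢ (x - n₂r₁ - νᵢ(G₁) - Γ_{Q(G₂)}(x-r₁)(νᵢ(G₁)-r₁)²)`. -/
theorem ncorona_signlessLap_charpoly {V₁ V₂ : Type*} [Fintype V₁] [Fintype V₂]
    [DecidableEq V₁] [DecidableEq V₂]
    (G₁ : SimpleGraph V₁) (G₂ : SimpleGraph V₂)
    [DecidableRel G₁.Adj] [DecidableRel G₂.Adj]
    (n₁ n₂ r₁ : ℕ) (h₁ : Fintype.card V₁ = n₁) (h₂ : Fintype.card V₂ = n₂)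
    (hn₁ : 2 ≤ n₁) (hn₂ : 1 ≤ n₂) (hr₁ : 1 ≤ r₁) (hreg : G₁.IsRegularOfDegree r₁)
    (hQ : (signlessLap G₁).IsHermitian)
    (x : ℝ) (hinv : IsUnit ((x - r₁) • (1 : Matrix V₂ V₂ ℝ) - signlessLap G₂).det) :
    (x • (1 : Matrix (V₁ ⊕ V₁ × V₂) (V₁ ⊕ V₁ × V₂) ℝ)
        - signlessLap (ncorona G₁ G₂)).det =
      ((x - r₁) • (1 : Matrix V₂ V₂ ℝ) - signlessLap G₂).det ^ n₁ *
        ∏ i : V₁, (x - n₂ * r₁ - hQ.eigenvalues i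
          - coronal (signlessLap G₂) (x - r₁) * (hQ.eigenvalues i - r₁) ^ 2) :=
  ncorona_signlessLap_charpoly_general G₁ G₂ n₁ n₂ r₁ h₁ h₂ hreg hQ x hinv
end
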